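/- Let Σ ∈ ℝ^{p×p} be positive definite, θ0 ∈ ℝ^p with support S of size s0, and ξ > 0. Then the (unique) population-level Lasso estimator θ̂∞(ξ) = argmin_θ {(1/2)⟨θ−θ0, Σ(θ−θ0)⟩ + ξ‖θ‖₁} satisfies ‖θ̂∞(ξ)‖₀ ≤ (1 + 4‖Σ‖₂/κ(s0,1))·s0, where κ(s,c0) is the restricted eigenvalue constant of Σ. -/

import Mathlib

open Matrix Finset MeasureTheory ProbabilityTheory
noncomputable section

/-- The ℓ¹ norm of a vector. -/
def l1n {p : ℕ} (v : Fin p → ℝ) : ℝ := ∑ i, |v i|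

/-- The number of nonzero entries of a vector (its "ℓ⁰ norm"). -/
def l0n {p : ℕ} (v : Fin p → ℝ) : ℕ := (Finset.univ.filter fun i => v i ≠ 0).card

/-- The support of a vector, as a `Finset`. -/
def suppv {p : ℕ} (v : Fin p → ℝ) : Finset (Fin p) := Finset.univ.filter fun i => v i ≠ 0

/-- The entrywise sign vector. -/
def sgnv {p : ℕ} (v : Fin p → ℝ) : Fin p → ℝ := fun i => Real.sign (v i)

/-- The zero-noise Lasso objective
`θ ↦ (1/2)⟨θ−θ0, Σ(θ−θ0)⟩ + ξ‖θ‖₁`. -/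
def znObj {p : ℕ} (S : Matrix (Fin p) (Fin p) ℝ) (th0 : Fin p → ℝ) (xi : ℝ)
    (th : Fin p → ℝ) : ℝ :=
  (1/2) * ((th - th0) ⬝ᵥ (S *ᵥ (th - th0))) + xi * l1n th

/-- The Lasso objective `θ ↦ (1/(2n))‖Y − Xθ‖₂² + λ‖θ‖₁`. -/
def lassoObj {n p : ℕ} (X : Matrix (Fin n) (Fin p) ℝ) (Y : Fin n → ℝ) (lam : ℝ)
    (th : Fin p → ℝ) : ℝ :=
  (1/(2*(n:ℝ))) * (∑ i, (Y i - (X *ᵥ th) i)^2) + lam * l1n th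

/-- The submatrix `A_{T,T'}` with rows in `T` and columns in `T'`. -/
def subM {p : ℕ} (A : Matrix (Fin p) (Fin p) ℝ) (T T' : Finset (Fin p)) : Matrix ↥T ↥T' ℝ :=
  A.submatrix Subtype.val Subtype.val

/-- The restriction `v_T` of a vector to coordinates in `T`. -/
def restrv {p : ℕ} (v : Fin p → ℝ) (T : Finset (Fin p)) : ↥T → ℝ := fun i => v i

/-- Extension of a vector indexed by `T` to a vector indexed by `Fin p`, by zero. -/
def extendT {p : ℕ} (T : Finset (Fin p)) (g : ↥T → ℝ) : Fin p → ℝ :=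
  fun i => if h : i ∈ T then g ⟨i, h⟩ else 0

/-!
Write `u = θ̂ − θ0` and `S = supp θ0`. Where `θ̂ᵢ ≠ 0` the objective is differentiable in the
`i`-th coordinate, so stationarity gives `(Σu)ᵢ = −ξ sign θ̂ᵢ`; hence
`ξ² ‖θ̂‖₀ ≤ ‖Σu‖² ≤ ‖Σ‖₂ ⟨u, Σu⟩`, the last step by Cauchy–Schwarz for the form `⟨·, Σ·⟩`.
Comparing the objective at `θ̂` and at `θ0` gives `⟨u, Σu⟩ ≤ 2ξ (‖u_S‖₁ − ‖u_{Sᶜ}‖₁)`, so `u` lies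
in the restricted-eigenvalue cone and `κ ⟨u, Σu⟩² ≤ 4ξ² ‖u_S‖₁² κ ≤ 4ξ² s0 κ ‖u‖₂² ≤ 4ξ² s0 ⟨u, Σu⟩`.
Together, `κ ‖θ̂‖₀ ≤ 4 ‖Σ‖₂ s0`.
-/

namespace Matrix

variable {n : Type*} [Fintype n] {A : Matrix n n ℝ}

theorem IsSymm.dotProduct_mulVec_comm (hA : A.IsSymm) (x y : n → ℝ) :
    x ⬝ᵥ A *ᵥ y = y ⬝ᵥ A *ᵥ x := by
  rw [dotProduct_mulVec, ← mulVec_transpose, hA.eq, dotProduct_comm]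

theorem IsSymm.dotProduct_mulVec_add_single [DecidableEq n] (hA : A.IsSymm) (u : n → ℝ)
    (i : n) (t : ℝ) :
    (u + Pi.single i t) ⬝ᵥ A *ᵥ (u + Pi.single i t)
      = u ⬝ᵥ A *ᵥ u + 2 * t * (A *ᵥ u) i + t ^ 2 * A i i := by
  have hii : (A *ᵥ Pi.single i t) i = A i i * t := by simp [mulVec, dotProduct_single]
  rw [mulVec_add, dotProduct_add, add_dotProduct, add_dotProduct,
    hA.dotProduct_mulVec_comm u (Pi.single i t), single_dotProduct, single_dotProduct, hii]
  ring

theorem PosSemidef.dotProduct_mulVec_nonneg' (hA : A.PosSemidef) (x : n → ℝ) :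
    0 ≤ x ⬝ᵥ A *ᵥ x := by
  simpa using hA.dotProduct_mulVec_nonneg x

theorem PosSemidef.sq_dotProduct_mulVec_le (hA : A.PosSemidef) (x y : n → ℝ) :
    (x ⬝ᵥ A *ᵥ y) ^ 2 ≤ (x ⬝ᵥ A *ᵥ x) * (y ⬝ᵥ A *ᵥ y) := by
  have hsymm : A.IsSymm := isHermitian_iff_isSymm.mp hA.isHermitian
  have hquad (t : ℝ) : 0 ≤ (y ⬝ᵥ A *ᵥ y) * (t * t) + 2 * (x ⬝ᵥ A *ᵥ y) * t + x ⬝ᵥ A *ᵥ x := by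
    have := hA.dotProduct_mulVec_nonneg' (x + t • y)
    simp only [mulVec_add, mulVec_smul, dotProduct_add, add_dotProduct, dotProduct_smul,
      smul_dotProduct, smul_eq_mul, hsymm.dotProduct_mulVec_comm y x] at this
    linarith
  have := discrim_le_zero hquad
  rw [discrim] at this
  nlinarith

theorem PosSemidef.sum_sq_mulVec_le (hA : A.PosSemidef) {B : ℝ} (hB0 : 0 ≤ B)
    (hB : ∀ v : n → ℝ, v ⬝ᵥ A *ᵥ v ≤ B * ∑ i, v i ^ 2) (u : n → ℝ) :
    ∑ i, (A *ᵥ u) i ^ 2 ≤ B * (u ⬝ᵥ A *ᵥ u) := by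
  set w := A *ᵥ u
  have hX : ∑ i, w i ^ 2 = u ⬝ᵥ A *ᵥ w := by
    rw [(isHermitian_iff_isSymm.mp hA.isHermitian).dotProduct_mulVec_comm]
    simp only [dotProduct, w, sq]
  have hQ := hA.dotProduct_mulVec_nonneg' u
  have hsq : (∑ i, w i ^ 2) ^ 2 ≤ B * (u ⬝ᵥ A *ᵥ u) * ∑ i, w i ^ 2 :=
    calc (∑ i, w i ^ 2) ^ 2 ≤ (u ⬝ᵥ A *ᵥ u) * (w ⬝ᵥ A *ᵥ w) := hX ▸ hA.sq_dotProduct_mulVec_le u w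
      _ ≤ (u ⬝ᵥ A *ᵥ u) * (B * ∑ i, w i ^ 2) := by gcongr; exact hB w
      _ = B * (u ⬝ᵥ A *ᵥ u) * ∑ i, w i ^ 2 := by ring
  have hX0 : 0 ≤ ∑ i, w i ^ 2 := by positivity
  nlinarith [mul_nonneg hB0 hQ]

theorem PosSemidef.nonneg_of_forall_le [Nonempty n] [DecidableEq n] (hA : A.PosSemidef) {B : ℝ}
    (hB : ∀ v : n → ℝ, v ⬝ᵥ A *ᵥ v ≤ B * ∑ i, v i ^ 2) : 0 ≤ B := by
  obtain ⟨i⟩ := ‹Nonempty n›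
  have hii : A i i ≤ B := by simpa [Pi.single_apply] using hB (Pi.single i 1)
  exact hA.diag_nonneg.trans hii

end Matrix

section Lasso

variable {p : ℕ}

theorem l1n_add_single (th : Fin p → ℝ) (i : Fin p) (t : ℝ) :
    l1n (th + Pi.single i t) = l1n th + (|th i + t| - |th i|) := by
  unfold l1n
  rw [← Finset.add_sum_erase _ _ (mem_univ i), ← Finset.add_sum_erase _ _ (mem_univ i)]
  have hrest : ∑ j ∈ univ.erase i, |(th + Pi.single i t : Fin p → ℝ) j|
      = ∑ j ∈ univ.erase i, |th j| :=
    Finset.sum_congr rfl fun j hj => by simp [ne_of_mem_erase hj]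
  rw [hrest, Pi.add_apply, Pi.single_eq_same]
  ring

theorem znObj_add_single {Sig : Matrix (Fin p) (Fin p) ℝ} (hSig : Sig.IsSymm)
    (th0 : Fin p → ℝ) (xi : ℝ) (th : Fin p → ℝ) (i : Fin p) (t : ℝ) :
    znObj Sig th0 xi (th + Pi.single i t)
      = znObj Sig th0 xi th + t * (Sig *ᵥ (th - th0)) i + t ^ 2 / 2 * Sig i i
        + xi * (|th i + t| - |th i|) := by
  have hshift : th + Pi.single i t - th0 = th - th0 + Pi.single i t := by abel
  rw [znObj, znObj, hshift, hSig.dotProduct_mulVec_add_single, l1n_add_single]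
  ring

theorem mulVec_sub_apply_eq_of_isMin {Sig : Matrix (Fin p) (Fin p) ℝ} (hSig : Sig.IsSymm)
    {th0 : Fin p → ℝ} {xi : ℝ} {thinf : Fin p → ℝ}
    (hmin : ∀ th, znObj Sig th0 xi thinf ≤ znObj Sig th0 xi th) {i : Fin p} (hi : thinf i ≠ 0) :
    (Sig *ᵥ (thinf - th0)) i = -(xi * SignType.sign (thinf i)) := by
  have hloc : IsLocalMin (fun t => znObj Sig th0 xi (thinf + Pi.single i t)) 0 :=
    Filter.Eventually.of_forall fun t => by
      simp only [Pi.single_zero, add_zero]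
      exact hmin _
  simp only [znObj_add_single hSig] at hloc
  have habs : HasDerivAt (fun t => |thinf i + t|) (SignType.sign (thinf i) : ℝ) 0 :=
    HasDerivAt.comp_const_add _ _ (by simpa using hasDerivAt_abs hi)
  have hderiv := ((((hasDerivAt_id (0 : ℝ)).mul_const ((Sig *ᵥ (thinf - th0)) i)).const_add
      (znObj Sig th0 xi thinf)).add (((hasDerivAt_pow 2 (0 : ℝ)).div_const 2).mul_const
      (Sig i i))).add ((habs.sub_const |thinf i|).const_mul xi)
  have := hloc.hasDerivAt_eq_zero hderiv
  simp only [one_mul, Nat.cast_ofNat, Nat.add_one_sub_one, pow_one, mul_zero, zero_div, zero_mul,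
    add_zero] at this
  linarith

theorem l1n_sub_l1n_le (th0 th : Fin p → ℝ) :
    l1n th0 - l1n th
      ≤ ∑ i ∈ suppv th0, |(th - th0) i| - ∑ i ∈ (suppv th0)ᶜ, |(th - th0) i| := by
  have hoff : ∀ i ∈ (suppv th0)ᶜ, th0 i = 0 := fun i hi => by simpa [suppv] using hi
  have hon : ∑ i ∈ suppv th0, (|th0 i| - |th i|) ≤ ∑ i ∈ suppv th0, |(th - th0) i| :=
    Finset.sum_le_sum fun i _ => by
      rw [Pi.sub_apply, abs_sub_comm]; exact abs_sub_abs_le_abs_sub _ _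
  have hth0 : ∑ i ∈ (suppv th0)ᶜ, |th0 i| = 0 :=
    Finset.sum_eq_zero fun i hi => by simp [hoff i hi]
  have hth : ∑ i ∈ (suppv th0)ᶜ, |th i| = ∑ i ∈ (suppv th0)ᶜ, |(th - th0) i| :=
    Finset.sum_congr rfl fun i hi => by simp [hoff i hi]
  rw [Finset.sum_sub_distrib] at hon
  rw [l1n, l1n, ← sum_add_sum_compl (suppv th0), ← sum_add_sum_compl (suppv th0) fun i => |th i|,
    hth0, hth]
  linarith

variable {Sig : Matrix (Fin p) (Fin p) ℝ} {th0 thinf : Fin p → ℝ} {xi : ℝ}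

theorem dotProduct_mulVec_le_of_isMin (hxi : 0 ≤ xi)
    (hmin : ∀ th, znObj Sig th0 xi thinf ≤ znObj Sig th0 xi th) :
    (thinf - th0) ⬝ᵥ Sig *ᵥ (thinf - th0) ≤ 2 * xi *
      (∑ i ∈ suppv th0, |(thinf - th0) i| - ∑ i ∈ (suppv th0)ᶜ, |(thinf - th0) i|) := by
  have hbasic := hmin th0
  simp only [znObj, sub_self, mulVec_zero, dotProduct_zero, mul_zero, zero_add] at hbasic
  nlinarith [mul_le_mul_of_nonneg_left (l1n_sub_l1n_le th0 thinf) hxi]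

theorem kappa_mul_dotProduct_mulVec_le (hSig : Sig.PosSemidef) (hxi : 0 < xi)
    {kappa : ℝ} (hkappa : 0 ≤ kappa)
    (hRE : ∀ (J : Finset (Fin p)) (u : Fin p → ℝ), J.card ≤ (suppv th0).card →
      ∑ i ∈ Jᶜ, |u i| ≤ ∑ i ∈ J, |u i| → kappa * ∑ i, u i ^ 2 ≤ u ⬝ᵥ Sig *ᵥ u)
    (hmin : ∀ th, znObj Sig th0 xi thinf ≤ znObj Sig th0 xi th) :
    kappa * ((thinf - th0) ⬝ᵥ Sig *ᵥ (thinf - th0)) ≤ 4 * xi ^ 2 * (suppv th0).card := by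
  set u := thinf - th0
  set S := suppv th0
  set Q := u ⬝ᵥ Sig *ᵥ u
  have hQ : 0 ≤ Q := hSig.dotProduct_mulVec_nonneg' u
  have hbasic := dotProduct_mulVec_le_of_isMin hxi.le hmin
  have hSc : 0 ≤ ∑ i ∈ Sᶜ, |u i| := by positivity
  have hcone : ∑ i ∈ Sᶜ, |u i| ≤ ∑ i ∈ S, |u i| := by nlinarith
  have hQA : Q ≤ 2 * xi * ∑ i ∈ S, |u i| := by nlinarith
  have hRE' : kappa * ∑ i, u i ^ 2 ≤ Q := hRE S u le_rfl hcone
  have hCS : (∑ i ∈ S, |u i|) ^ 2 ≤ S.card * ∑ i, u i ^ 2 :=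
    calc (∑ i ∈ S, |u i|) ^ 2 ≤ S.card * ∑ i ∈ S, |u i| ^ 2 := sq_sum_le_card_mul_sum_sq
      _ ≤ S.card * ∑ i, u i ^ 2 := by
        simp only [sq_abs]
        gcongr
        exact subset_univ S
  have hQsq : kappa * Q ^ 2 ≤ 4 * xi ^ 2 * S.card * Q :=
    calc kappa * Q ^ 2 ≤ kappa * (2 * xi * ∑ i ∈ S, |u i|) ^ 2 := by gcongr
      _ = 4 * xi ^ 2 * (kappa * (∑ i ∈ S, |u i|) ^ 2) := by ring
      _ ≤ 4 * xi ^ 2 * (kappa * (S.card * ∑ i, u i ^ 2)) := by gcongr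
      _ = 4 * xi ^ 2 * S.card * (kappa * ∑ i, u i ^ 2) := by ring
      _ ≤ 4 * xi ^ 2 * S.card * Q := by gcongr
  rcases hQ.eq_or_lt with h | h
  · rw [← h, mul_zero]; positivity
  · exact le_of_mul_le_mul_right (by linarith) h

theorem l0n_mul_sq_le_sum_sq (hSig : Sig.IsSymm)
    (hmin : ∀ th, znObj Sig th0 xi thinf ≤ znObj Sig th0 xi th) :
    (l0n thinf : ℝ) * xi ^ 2 ≤ ∑ i, (Sig *ᵥ (thinf - th0)) i ^ 2 := by
  have hsupp : ∀ i ∈ suppv thinf, (Sig *ᵥ (thinf - th0)) i ^ 2 = xi ^ 2 := fun i hi => by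
    have hi : thinf i ≠ 0 := (mem_filter.mp hi).2
    rw [mulVec_sub_apply_eq_of_isMin hSig hmin hi, neg_sq, mul_pow]
    rcases hi.lt_or_gt with h | h <;> simp [h]
  calc (l0n thinf : ℝ) * xi ^ 2 = ∑ i ∈ suppv thinf, (Sig *ᵥ (thinf - th0)) i ^ 2 := by
        rw [sum_congr rfl hsupp, sum_const, nsmul_eq_mul]; rfl
    _ ≤ ∑ i, (Sig *ᵥ (thinf - th0)) i ^ 2 :=
        sum_le_sum_of_subset_of_nonneg (subset_univ _) fun i _ _ => sq_nonneg _

end Lasso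

/-- Lemma 6 of the paper.  Let `Σ` be positive definite, `θ0` have
support of size `s0`, `ξ > 0`.  Then the unique population-level estimator `θ̂∞(ξ)`
satisfies `‖θ̂∞(ξ)‖₀ ≤ (1 + 4‖Σ‖₂/κ(s0,1))·s0`.  The restricted eigenvalue constant
`κ(s0,1)` is formalized as any positive lower bound `kappa` on the restricted quadratic
form, and the operator norm `‖Σ‖₂` of the symmetric matrix `Σ` as any upper bound `B` on
the quadratic form on unit vectors. -/
theorem stmt9
    (p : ℕ)
    (Sig : Matrix (Fin p) (Fin p) ℝ) (hSig : Sig.PosDef)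
    (th0 : Fin p → ℝ) (s0 : ℕ) (hs0 : s0 = (suppv th0).card)
    (xi : ℝ) (hxi : 0 < xi)
    (kappa : ℝ) (hkappa : 0 < kappa)
    (hRE : ∀ (J : Finset (Fin p)) (u : Fin p → ℝ), J.card ≤ s0 →
      (∑ i ∈ Jᶜ, |u i|) ≤ (∑ i ∈ J, |u i|) →
      kappa * (∑ i, (u i)^2) ≤ u ⬝ᵥ (Sig *ᵥ u))
    (B : ℝ)
    (hB : ∀ u : Fin p → ℝ, u ⬝ᵥ (Sig *ᵥ u) ≤ B * (∑ i, (u i)^2))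
    (thinf : Fin p → ℝ)
    (hmin : ∀ th : Fin p → ℝ, znObj Sig th0 xi thinf ≤ znObj Sig th0 xi th) :
    (l0n thinf : ℝ) ≤ (1 + 4 * B / kappa) * s0 := by
  subst hs0
  rcases isEmpty_or_nonempty (Fin p) with hp | hp
  · simp [l0n, suppv]
  have hPSD := hSig.posSemidef
  have hB0 : 0 ≤ B := hPSD.nonneg_of_forall_le hB
  set Q := (thinf - th0) ⬝ᵥ Sig *ᵥ (thinf - th0)
  have hcount : (l0n thinf : ℝ) * xi ^ 2 ≤ B * Q :=
    (l0n_mul_sq_le_sum_sq (isHermitian_iff_isSymm.mp hSig.isHermitian) hmin).trans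
      (hPSD.sum_sq_mulVec_le hB0 hB _)
  have hQ : kappa * Q ≤ 4 * xi ^ 2 * (suppv th0).card :=
    kappa_mul_dotProduct_mulVec_le hPSD hxi hkappa.le hRE hmin
  have hfin : (l0n thinf : ℝ) * kappa ≤ 4 * B * (suppv th0).card := by
    refine le_of_mul_le_mul_right ?_ (pow_pos hxi 2)
    calc (l0n thinf : ℝ) * kappa * xi ^ 2 = kappa * ((l0n thinf : ℝ) * xi ^ 2) := by ring
      _ ≤ kappa * (B * Q) := by gcongr
      _ = B * (kappa * Q) := by ring
      _ ≤ B * (4 * xi ^ 2 * (suppv th0).card) := by gcongr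
      _ = 4 * B * (suppv th0).card * xi ^ 2 := by ring
  have hl0 : (l0n thinf : ℝ) ≤ 4 * B * (suppv th0).card / kappa := (le_div_iff₀ hkappa).mpr hfin
  rw [add_mul, one_mul, div_mul_eq_mul_div]
  linarith [(Nat.cast_nonneg (suppv th0).card : (0 : ℝ) ≤ _)]
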